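/- Let (X, ‖·‖) be a real Banach space and let T : X → X be a (b, θ)-enriched contraction, i.e., there exist b ∈ [0,∞) and θ ∈ [0, b+1) such that ‖b(u−v) + Tu − Tv‖ ≤ θ‖u−v‖ for all u, v ∈ X. Then the fixed point problem for T has the limit shadowing property: for every sequence (u_n) in X with ‖u_n − T u_n‖ → 0 as n → ∞, there exists p ∈ X such that ‖Tⁿp − u_n‖ → 0 as n → ∞. -/

import Mathlib

/-!
With `t = 1 / (b + 1)`, the averaged map `T_t = (1 - t) • id + t • T` satisfies
`T_t u - T_t v = t • (b • (u - v) + T u - T v)`, so it is a Banach contraction with constant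
`θ / (b + 1) < 1`, and its fixed points are those of `T`. Its fixed point `p` is then fixed by
every `Tⁿ`, and the a posteriori estimate for `T_t` gives
`‖u - p‖ ≤ ‖u - T_t u‖ / (1 - θ / (b + 1)) = t ‖u - T u‖ / (1 - θ / (b + 1))`,
which tends to `0` along any sequence with `‖uₙ - T uₙ‖ → 0`.
-/

open Filter Function Topology

section AveragedMap

variable {X : Type*} [NormedAddCommGroup X] [NormedSpace ℝ X]

def averagedMap (T : X → X) (t : ℝ) (x : X) : X :=
  (1 - t) • x + t • T x

theorem sub_averagedMap (T : X → X) (t : ℝ) (x : X) :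
    x - averagedMap T t x = t • (x - T x) := by
  unfold averagedMap; module

theorem isFixedPt_averagedMap_iff {T : X → X} {t : ℝ} (ht : t ≠ 0) {x : X} :
    IsFixedPt (averagedMap T t) x ↔ IsFixedPt T x := by
  rw [IsFixedPt, IsFixedPt, eq_comm, ← sub_eq_zero, sub_averagedMap, smul_eq_zero,
    or_iff_right ht, sub_eq_zero, eq_comm]

theorem averagedMap_sub_averagedMap_inv (T : X → X) {b : ℝ} (hb : b + 1 ≠ 0) (x y : X) :
    averagedMap T (b + 1)⁻¹ x - averagedMap T (b + 1)⁻¹ y =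
      (b + 1)⁻¹ • (b • (x - y) + T x - T y) := by
  have hsub : 1 - (b + 1)⁻¹ = (b + 1)⁻¹ * b := by field_simp; ring
  unfold averagedMap
  rw [hsub]
  module

theorem norm_averagedMap_sub_le {T : X → X} {b θ : ℝ} (hb : 0 ≤ b)
    (hT : ∀ u v : X, ‖b • (u - v) + T u - T v‖ ≤ θ * ‖u - v‖) (x y : X) :
    ‖averagedMap T (b + 1)⁻¹ x - averagedMap T (b + 1)⁻¹ y‖ ≤ θ / (b + 1) * ‖x - y‖ := by
  have hb1 : 0 < b + 1 := by linarith
  calc ‖averagedMap T (b + 1)⁻¹ x - averagedMap T (b + 1)⁻¹ y‖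
      = (b + 1)⁻¹ * ‖b • (x - y) + T x - T y‖ := by
        rw [averagedMap_sub_averagedMap_inv T hb1.ne', norm_smul,
          Real.norm_of_nonneg (by positivity)]
    _ ≤ (b + 1)⁻¹ * (θ * ‖x - y‖) := by gcongr; exact hT x y
    _ = θ / (b + 1) * ‖x - y‖ := by ring

theorem contractingWith_averagedMap {T : X → X} {b θ : ℝ} (hb : 0 ≤ b) (hθ : θ < b + 1)
    (hT : ∀ u v : X, ‖b • (u - v) + T u - T v‖ ≤ θ * ‖u - v‖) :
    ContractingWith (θ / (b + 1)).toNNReal (averagedMap T (b + 1)⁻¹) := by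
  refine ⟨Real.toNNReal_lt_one.mpr ((div_lt_one (by linarith)).mpr hθ), ?_⟩
  refine LipschitzWith.of_dist_le' fun x y => ?_
  simpa only [dist_eq_norm] using norm_averagedMap_sub_le hb hT x y

end AveragedMap

theorem tendsto_norm_iterate_sub_of_isFixedPt {X : Type*} [NormedAddCommGroup X]
    {T : X → X} {p : X} (hp : IsFixedPt T p) {C : ℝ} (hC : ∀ x, ‖x - p‖ ≤ C * ‖x - T x‖)
    {u : ℕ → X} (hu : Tendsto (fun n => ‖u n - T (u n)‖) atTop (𝓝 0)) :
    Tendsto (fun n => ‖T^[n] p - u n‖) atTop (𝓝 0) := by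
  have hbound : Tendsto (fun n => C * ‖u n - T (u n)‖) atTop (𝓝 0) := by
    simpa using hu.const_mul C
  refine squeeze_zero (fun _ => norm_nonneg _) (fun n => ?_) hbound
  rw [hp.iterate n, norm_sub_rev]
  exact hC (u n)

theorem exists_isFixedPt_norm_sub_le_of_enriched {X : Type*} [NormedAddCommGroup X]
    [NormedSpace ℝ X] [CompleteSpace X] {T : X → X} {b θ : ℝ} (hb : 0 ≤ b) (hθ : θ < b + 1)
    (hT : ∀ u v : X, ‖b • (u - v) + T u - T v‖ ≤ θ * ‖u - v‖) :
    ∃ p, IsFixedPt T p ∧ ∃ C : ℝ, ∀ x, ‖x - p‖ ≤ C * ‖x - T x‖ := by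
  have hK := contractingWith_averagedMap hb hθ hT
  have : Nonempty X := ⟨0⟩
  have ht : (b + 1)⁻¹ ≠ 0 := inv_ne_zero (by linarith)
  refine ⟨_, (isFixedPt_averagedMap_iff ht).mp hK.fixedPoint_isFixedPt,
    (b + 1)⁻¹ / (1 - (θ / (b + 1)).toNNReal), fun x => ?_⟩
  have := hK.dist_fixedPoint_le x
  rw [dist_eq_norm, dist_eq_norm, sub_averagedMap, norm_smul,
    Real.norm_of_nonneg (by positivity)] at this
  rwa [div_mul_eq_mul_div]

theorem enriched_contraction_limitShadowing_general
    {X : Type*} [NormedAddCommGroup X] [NormedSpace ℝ X] [CompleteSpace X]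
    (T : X → X) (b θ : ℝ) (hb : 0 ≤ b) (hθ : θ < b + 1)
    (hT : ∀ u v : X, ‖b • (u - v) + T u - T v‖ ≤ θ * ‖u - v‖) :
    ∀ u : ℕ → X,
      Filter.Tendsto (fun n => ‖u n - T (u n)‖) Filter.atTop (nhds 0) →
      ∃ p : X, Filter.Tendsto (fun n => ‖T^[n] p - u n‖) Filter.atTop (nhds 0) := by
  intro u hu
  obtain ⟨p, hp, C, hC⟩ := exists_isFixedPt_norm_sub_le_of_enriched hb hθ hT
  exact ⟨p, tendsto_norm_iterate_sub_of_isFixedPt hp hC hu⟩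

/-- The fixed point problem of a `(b, θ)`-enriched contraction on a real Banach space
has the limit shadowing property. -/
theorem enriched_contraction_limitShadowing
    {X : Type*} [NormedAddCommGroup X] [NormedSpace ℝ X] [CompleteSpace X]
    (T : X → X) (b θ : ℝ) (hb : 0 ≤ b) (hθ0 : 0 ≤ θ) (hθ : θ < b + 1)
    (hT : ∀ u v : X, ‖b • (u - v) + T u - T v‖ ≤ θ * ‖u - v‖) :
    ∀ u : ℕ → X,
      Filter.Tendsto (fun n => ‖u n - T (u n)‖) Filter.atTop (nhds 0) →
      ∃ p : X, Filter.Tendsto (fun n => ‖T^[n] p - u n‖) Filter.atTop (nhds 0) :=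
  enriched_contraction_limitShadowing_general T b θ hb hθ hT
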